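/- arXiv:1603.00544 — 2 statements merged into one kernel-verified Lean document; each statement's English description precedes it below -/
import Mathlib

section
/- Let Y be a random variable taking values in a countable set, distributed with pmf p, and let q be another pmf with q(y) > 0 whenever p(y) > 0. Let A be an event with p(A) ∈ (0,1), and suppose p(A) ≥ 1 − δ and q(A) ≤ δ for δ ∈ (0, 1/2). Then E_p[ ln(p(Y)/q(Y)) ] ≥ (1 − δ) ln((1−δ)/δ) − e^{−1}. (Proof sketch: condition on A and its complement, apply Jensen's inequality to −ln of the conditional expectation of q/p on each event, use the change-of-measure identity, and bound the complement term via x ln x ≥ −1/e.) -/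
open scoped Classical

/-!
Split the sum over `A` and its complement and apply the log-sum inequality
`(∑ p) log (∑ p / ∑ q) ≤ ∑ p log (p / q)` on each part. On `A` the left side is at least
`(1 - δ) log ((1 - δ) / δ)`, since it increases in `∑ p` and decreases in `∑ q`. On the
complement `∑ q ≤ 1`, so the left side is at least `x log x ≥ -1/e` with `x = ∑ p`.
-/

open Real Finset

lemma Real.neg_inv_exp_le_mul_log {x : ℝ} (hx : 0 ≤ x) : -(exp 1)⁻¹ ≤ x * log x := by
  rcases hx.eq_or_lt with rfl | hx
  · simpa using (exp_pos 1).le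
  -- `log y ≤ y - 1` at `y = (e x)⁻¹`
  have h := log_le_sub_one_of_pos (inv_pos.2 (mul_pos (exp_pos 1) hx))
  rw [log_inv, log_mul (exp_pos 1).ne' hx.ne', log_exp] at h
  have hex : x * (exp 1 * x)⁻¹ = (exp 1)⁻¹ := by field_simp
  nlinarith [mul_le_mul_of_nonneg_left h hx.le]

lemma Real.mul_log_le_mul_log_div {x y : ℝ} (hx : 0 ≤ x) (hy : y ≤ 1) (hxy : 0 < x → 0 < y) :
    x * log x ≤ x * log (x / y) := by
  rcases hx.eq_or_lt with rfl | hx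
  · simp
  have hy0 := hxy hx
  rw [log_div hx.ne' hy0.ne']
  nlinarith [log_nonpos hy0.le hy]

lemma Real.mul_log_div_le_mul_log_div {a b c d : ℝ} (hd : 0 < d) (hdc : d ≤ c) (hca : c ≤ a)
    (hb : 0 < b) (hbd : b ≤ d) : c * log (c / d) ≤ a * log (a / b) := by
  have hlog : log (c / d) ≤ log (a / b) :=
    log_le_log (div_pos (hd.trans_le hdc) hd) (div_le_div₀ (by linarith) hca hb hbd)
  have hnonneg : 0 ≤ log (c / d) := log_nonneg ((one_le_div hd).2 hdc)
  exact mul_le_mul hca hlog hnonneg (by linarith)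

/-- Summed with `r = (∑ p) / ∑ q`, this gives the log-sum inequality. -/
lemma Real.mul_log_add_sub_le_mul_log_div {p q r : ℝ} (hp : 0 ≤ p) (hq : 0 ≤ q)
    (hpq : 0 < p → 0 < q) (hr : 0 < r) : p * log r + p - q * r ≤ p * log (p / q) := by
  rcases hp.eq_or_lt with rfl | hp
  · simp only [zero_mul, add_zero, zero_sub, neg_nonpos]
    positivity
  have hq := hpq hp
  have h := one_sub_inv_le_log_of_pos (show 0 < p / (q * r) by positivity)
  rw [log_div hp.ne' (by positivity), log_mul hq.ne' hr.ne'] at h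
  rw [log_div hp.ne' hq.ne']
  have hinv : p * (p / (q * r))⁻¹ = q * r := by field_simp
  nlinarith [mul_le_mul_of_nonneg_left h hp.le]

namespace Finset

variable {ι : Type*} {s : Finset ι} {p q : ι → ℝ}

lemma sum_pos_of_pos_imp_pos (hq : ∀ i ∈ s, 0 ≤ q i) (hpq : ∀ i ∈ s, 0 < p i → 0 < q i)
    (hp : 0 < ∑ i ∈ s, p i) : 0 < ∑ i ∈ s, q i := by
  obtain ⟨i, hi, hpi⟩ : ∃ i ∈ s, 0 < p i := by
    by_contra! h
    exact hp.not_ge (sum_nonpos h)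
  exact (hpq i hi hpi).trans_le (single_le_sum hq hi)

theorem sum_mul_log_div_le (hp : ∀ i ∈ s, 0 ≤ p i) (hq : ∀ i ∈ s, 0 ≤ q i)
    (hpq : ∀ i ∈ s, 0 < p i → 0 < q i) :
    (∑ i ∈ s, p i) * log ((∑ i ∈ s, p i) / ∑ i ∈ s, q i)
      ≤ ∑ i ∈ s, p i * log (p i / q i) := by
  set a := ∑ i ∈ s, p i
  set b := ∑ i ∈ s, q i
  rcases (sum_nonneg hp).eq_or_lt with ha | ha
  · have hzero : ∀ i ∈ s, p i = 0 := (sum_eq_zero_iff_of_nonneg hp).1 ha.symm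
    rw [show a = 0 from ha.symm, zero_mul, sum_eq_zero fun i hi => by rw [hzero i hi, zero_mul]]
  have hb := sum_pos_of_pos_imp_pos hq hpq ha
  have htangent := sum_le_sum fun i hi =>
    mul_log_add_sub_le_mul_log_div (hp i hi) (hq i hi) (hpq i hi) (div_pos ha hb)
  rw [sum_sub_distrib, sum_add_distrib, ← sum_mul, ← sum_mul,
    mul_div_cancel₀ a hb.ne'] at htangent
  linarith

end Finset

theorem expected_log_likelihood_lower_bound_general
    {Y : Type*} [Fintype Y] (p q : Y → ℝ) (A : Set Y)
    (hp0 : ∀ y, 0 ≤ p y)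
    (hq0 : ∀ y, 0 ≤ q y) (hq1 : ∑ y, q y = 1)
    (hsupp : ∀ y, 0 < p y → 0 < q y)
    (δ : ℝ) (hδ : δ ∈ Set.Ioo (0 : ℝ) (1/2))
    (hpA' : 1 - δ ≤ ∑ y, if y ∈ A then p y else 0)
    (hqA : (∑ y, if y ∈ A then q y else 0) ≤ δ) :
    (1 - δ) * Real.log ((1 - δ) / δ) - (Real.exp 1)⁻¹
      ≤ ∑ y, p y * Real.log (p y / q y) := by
  obtain ⟨hδ0, hδ2⟩ := hδ
  rw [← sum_filter] at hpA' hqA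
  rw [← sum_filter_add_sum_filter_not univ (· ∈ A)]
  have hS := sum_mul_log_div_le (s := univ.filter (· ∈ A)) (fun y _ => hp0 y) (fun y _ => hq0 y)
    fun y _ => hsupp y
  have hT := sum_mul_log_div_le (s := univ.filter (· ∉ A)) (fun y _ => hp0 y) (fun y _ => hq0 y)
    fun y _ => hsupp y
  have hqS_pos := sum_pos_of_pos_imp_pos (s := univ.filter (· ∈ A)) (fun y _ => hq0 y)
    (fun y _ => hsupp y) (by linarith)
  have hqT_le : ∑ y ∈ univ.filter (· ∉ A), q y ≤ 1 := by
    rw [← hq1, ← sum_filter_add_sum_filter_not univ (· ∈ A)]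
    linarith
  have hA := mul_log_div_le_mul_log_div hδ0 (by linarith) hpA' hqS_pos hqA
  have hAc := (neg_inv_exp_le_mul_log (sum_nonneg fun y _ => hp0 y)).trans
    (mul_log_le_mul_log_div (sum_nonneg fun y _ => hp0 y) hqT_le
      fun h => sum_pos_of_pos_imp_pos (fun y _ => hq0 y) (fun y _ => hsupp y) h)
  linarith

theorem expected_log_likelihood_lower_bound
    {Y : Type*} [Fintype Y] (p q : Y → ℝ) (A : Set Y)
    (hp0 : ∀ y, 0 ≤ p y) (hp1 : ∑ y, p y = 1)
    (hq0 : ∀ y, 0 ≤ q y) (hq1 : ∑ y, q y = 1)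
    (hsupp : ∀ y, 0 < p y → 0 < q y)
    (δ : ℝ) (hδ : δ ∈ Set.Ioo (0 : ℝ) (1/2))
    (hpA : (∑ y, if y ∈ A then p y else 0) ∈ Set.Ioo (0 : ℝ) 1)
    (hpA' : 1 - δ ≤ ∑ y, if y ∈ A then p y else 0)
    (hqA : (∑ y, if y ∈ A then q y else 0) ≤ δ) :
    (1 - δ) * Real.log ((1 - δ) / δ) - (Real.exp 1)⁻¹
      ≤ ∑ y, p y * Real.log (p y / q y) :=
  expected_log_likelihood_lower_bound_general p q A hp0 hq0 hq1 hsupp δ hδ hpA' hqA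
end

section
/- Variant of the Arzelà–Ascoli theorem: Fix T > 0 and c > 0. Let {f_s}_{s∈ℕ} be a sequence of functions from [0,T] to ℝ such that (1) sup_s |f_s(0)| < ∞, and (2) there exists a sequence ε_s → 0 with |f_s(a) − f_s(b)| ≤ c|a − b| + ε_s for all a, b ∈ [0,T] and all s. Then there exists a c-Lipschitz function f* : [0,T] → ℝ and a strictly increasing sequence (s_j) such that sup_{t∈[0,T]} |f_{s_j}(t) − f*(t)| → 0 as j → ∞. -/
/-!
Replace each `f s` by its Pasch–Hausdorff envelope `g s x = ⨅ y, f s y + c * |x - y|`. Because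
`f s` is `c`-Lipschitz up to the error `ε s`, the envelope is genuinely `c`-Lipschitz and lies
within `ε s` below `f s`. The classical Arzelà–Ascoli theorem applies to the uniformly bounded,
equi-Lipschitz sequence `g s`, and since `ε s → 0`, a uniform limit of a subsequence of `g s` is
also one of the corresponding subsequence of `f s`.
-/

open Filter Set Topology NNReal
open scoped BoundedContinuousFunction

variable {X : Type*} [PseudoMetricSpace X]

noncomputable def lipschitzMinorant (K : ℝ≥0) (f : X → ℝ) (x : X) : ℝ :=
  ⨅ y, f y + K * dist x y

section lipschitzMinorant

variable {K : ℝ≥0} {f : X → ℝ} {e : ℝ}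

lemma bddBelow_range_add_mul_dist (hf : ∀ x y, f x ≤ f y + K * dist x y + e) (x : X) :
    BddBelow (range fun y => f y + K * dist x y) :=
  ⟨f x - e, by rintro _ ⟨y, rfl⟩; linarith [hf x y]⟩

lemma lipschitzMinorant_le (hf : ∀ x y, f x ≤ f y + K * dist x y + e) (x : X) :
    lipschitzMinorant K f x ≤ f x := by
  simpa [lipschitzMinorant] using ciInf_le (bddBelow_range_add_mul_dist hf x) x

lemma sub_le_lipschitzMinorant (hf : ∀ x y, f x ≤ f y + K * dist x y + e) (x : X) :
    f x - e ≤ lipschitzMinorant K f x :=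
  have : Nonempty X := ⟨x⟩
  le_ciInf fun y => by linarith [hf x y]

lemma dist_lipschitzMinorant_le (hf : ∀ x y, f x ≤ f y + K * dist x y + e) (x : X) :
    dist (lipschitzMinorant K f x) (f x) ≤ e := by
  rw [Real.dist_eq, abs_sub_comm, abs_le]
  constructor <;> linarith [lipschitzMinorant_le hf x, sub_le_lipschitzMinorant hf x]

lemma lipschitzWith_lipschitzMinorant (hf : ∀ x y, f x ≤ f y + K * dist x y + e) :
    LipschitzWith K (lipschitzMinorant K f) := by
  refine LipschitzWith.of_le_add_mul K fun x y => ?_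
  have : Nonempty X := ⟨x⟩
  rw [← sub_le_iff_le_add]
  refine le_ciInf fun z => ?_
  have hxz : lipschitzMinorant K f x ≤ f z + K * dist x z :=
    ciInf_le (bddBelow_range_add_mul_dist hf x) z
  have htri : K * dist x z ≤ K * dist y z + K * dist x y := by
    rw [← mul_add, add_comm]
    gcongr
    exact dist_triangle x y z
  linarith

end lipschitzMinorant

theorem TendstoUniformly.of_dist_le {ι α β : Type*} [PseudoMetricSpace β] {l : Filter ι}
    {F G : ι → α → β} {g : α → β} {ε : ι → ℝ} (hG : TendstoUniformly G g l)
    (hε : Tendsto ε l (𝓝 0)) (hFG : ∀ n x, dist (F n x) (G n x) ≤ ε n) :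
    TendstoUniformly F g l := by
  refine Metric.tendstoUniformly_iff.2 fun δ hδ => ?_
  filter_upwards [Metric.tendstoUniformly_iff.1 hG (δ / 2) (half_pos hδ),
    hε.eventually (gt_mem_nhds (half_pos hδ))] with n hGn hεn x
  calc dist (g x) (F n x) ≤ dist (g x) (G n x) + dist (F n x) (G n x) := dist_triangle_right _ _ _
    _ < δ := by linarith [hGn x, hFG n x]

theorem exists_lipschitzWith_tendstoUniformly_subseq [CompactSpace X] {K : ℝ≥0}
    {g : ℕ → X → ℝ} (hg : ∀ n, LipschitzWith K (g n)) {M : ℝ} (hM : ∀ n x, |g n x| ≤ M) :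
    ∃ F : X → ℝ, LipschitzWith K F ∧
      ∃ φ : ℕ → ℕ, StrictMono φ ∧ TendstoUniformly (fun j => g (φ j)) F atTop := by
  let G : ℕ → X →ᵇ ℝ := fun n => .mkOfCompact ⟨g n, (hg n).continuous⟩
  have hequi : Equicontinuous ((↑) : range G → X → ℝ) := by
    refine Metric.equicontinuous_of_continuity_modulus (fun d => K * d) ?_ _ ?_
    · simpa using (tendsto_id (x := 𝓝 (0 : ℝ))).const_mul (K : ℝ)
    · rintro x y ⟨_, n, rfl⟩
      exact (hg n).dist_le_mul x y
  have hcompact : IsCompact (closure (range G)) :=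
    BoundedContinuousFunction.arzela_ascoli (Icc (-M) M) isCompact_Icc _
      (by rintro _ x ⟨n, rfl⟩; exact abs_le.1 (hM n x)) hequi
  obtain ⟨F, -, φ, hφ, hGF⟩ := hcompact.tendsto_subseq fun n => subset_closure ⟨n, rfl⟩
  have hunif : TendstoUniformly (fun j => g (φ j)) F atTop :=
    BoundedContinuousFunction.tendsto_iff_tendstoUniformly.1 hGF
  refine ⟨F, ?_, φ, hφ, hunif⟩
  exact (isClosed_setOfPred_lipschitzWith K).mem_of_tendsto
    (tendsto_pi_nhds.2 hunif.tendsto_at) (Eventually.of_forall fun j => hg (φ j))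

theorem exists_lipschitzWith_tendstoUniformly_subseq_of_approx [CompactSpace X] {K : ℝ≥0}
    {f : ℕ → X → ℝ} {ε : ℕ → ℝ} (hε : Tendsto ε atTop (𝓝 0))
    (hf : ∀ n x y, f n x ≤ f n y + K * dist x y + ε n) {M : ℝ} (hM : ∀ n x, |f n x| ≤ M) :
    ∃ F : X → ℝ, LipschitzWith K F ∧
      ∃ φ : ℕ → ℕ, StrictMono φ ∧ TendstoUniformly (fun j => f (φ j)) F atTop := by
  obtain ⟨E, hE⟩ := hε.bddAbove_range
  let g n := lipschitzMinorant K (f n)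
  have hgf : ∀ n x, dist (g n x) (f n x) ≤ ε n := fun n => dist_lipschitzMinorant_le (hf n)
  have hgM : ∀ n x, |g n x| ≤ M + E := fun n x => by
    have := abs_sub_abs_le_abs_sub (g n x) (f n x)
    rw [← Real.dist_eq] at this
    linarith [hM n x, hgf n x, hE ⟨n, rfl⟩]
  obtain ⟨F, hF, φ, hφ, hgF⟩ :=
    exists_lipschitzWith_tendstoUniformly_subseq
      (fun n => lipschitzWith_lipschitzMinorant (hf n)) hgM
  exact ⟨F, hF, φ, hφ, hgF.of_dist_le (hε.comp hφ.tendsto_atTop)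
    fun j x => (dist_comm _ _).trans_le (hgf (φ j) x)⟩

theorem arzela_ascoli_variant_general
    (T c : ℝ) (hc : 0 < c) (f : ℕ → ℝ → ℝ)
    (hbdd : ∃ C : ℝ, ∀ s, |f s 0| ≤ C)
    (ε : ℕ → ℝ) (hε : Tendsto ε atTop (nhds 0))
    (hlip : ∀ s, ∀ a ∈ Icc (0 : ℝ) T, ∀ b ∈ Icc (0 : ℝ) T,
      |f s a - f s b| ≤ c * |a - b| + ε s) :
    ∃ fstar : ℝ → ℝ,
      (∀ a ∈ Icc (0 : ℝ) T, ∀ b ∈ Icc (0 : ℝ) T, |fstar a - fstar b| ≤ c * |a - b|)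
      ∧ ∃ s : ℕ → ℕ, StrictMono s ∧
          ∀ η > (0 : ℝ), ∃ J : ℕ, ∀ j ≥ J, ∀ t ∈ Icc (0 : ℝ) T,
            |f (s j) t - fstar t| ≤ η := by
  obtain ⟨C, hC⟩ := hbdd
  obtain ⟨E, hE⟩ := hε.bddAbove_range
  have hK : (c.toNNReal : ℝ) = c := Real.coe_toNNReal c hc.le
  have happrox : ∀ s (x y : Icc 0 T), f s x ≤ f s y + c.toNNReal * dist x y + ε s :=
    fun s x y => by
      rw [hK, Subtype.dist_eq, Real.dist_eq]
      linarith [(abs_le.1 (hlip s x x.2 y y.2)).2]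
  have hbound : ∀ s (x : Icc 0 T), |f s x| ≤ C + c * T + E := fun s x => by
    have h0 : (0 : ℝ) ∈ Icc 0 T := ⟨le_rfl, x.2.1.trans x.2.2⟩
    have hx : c * |(x : ℝ) - 0| ≤ c * T := by
      rw [sub_zero, abs_of_nonneg x.2.1]
      exact mul_le_mul_of_nonneg_left x.2.2 hc.le
    linarith [abs_sub_abs_le_abs_sub (f s x) (f s 0), hlip s x x.2 0 h0, hC s, hE ⟨s, rfl⟩]
  obtain ⟨F, hF, φ, hφ, hconv⟩ :=
    exists_lipschitzWith_tendstoUniformly_subseq_of_approx hε happrox hbound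
  refine ⟨fun t => if ht : t ∈ Icc 0 T then F ⟨t, ht⟩ else 0, fun a ha b hb => ?_, φ, hφ,
    fun η hη => ?_⟩
  · simpa [ha, hb, hK, Subtype.dist_eq, Real.dist_eq] using hF.dist_le_mul ⟨a, ha⟩ ⟨b, hb⟩
  · obtain ⟨J, hJ⟩ := eventually_atTop.1 (Metric.tendstoUniformly_iff.1 hconv η hη)
    refine ⟨J, fun j hj t ht => ?_⟩
    simpa [ht, Real.dist_eq, abs_sub_comm] using (hJ j hj ⟨t, ht⟩).le

theorem arzela_ascoli_variant
    (T c : ℝ) (hT : 0 < T) (hc : 0 < c) (f : ℕ → ℝ → ℝ)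
    (hbdd : ∃ C : ℝ, ∀ s, |f s 0| ≤ C)
    (ε : ℕ → ℝ) (hε0 : ∀ s, 0 ≤ ε s) (hε : Tendsto ε atTop (nhds 0))
    (hlip : ∀ s, ∀ a ∈ Icc (0 : ℝ) T, ∀ b ∈ Icc (0 : ℝ) T,
      |f s a - f s b| ≤ c * |a - b| + ε s) :
    ∃ fstar : ℝ → ℝ,
      (∀ a ∈ Icc (0 : ℝ) T, ∀ b ∈ Icc (0 : ℝ) T, |fstar a - fstar b| ≤ c * |a - b|)
      ∧ ∃ s : ℕ → ℕ, StrictMono s ∧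
          ∀ η > (0 : ℝ), ∃ J : ℕ, ∀ j ≥ J, ∀ t ∈ Icc (0 : ℝ) T,
            |f (s j) t - fstar t| ≤ η :=
  arzela_ascoli_variant_general T c hc f hbdd ε hε hlip
end
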